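/- High-probability Fano bound: let M ≥ 2 be an integer, θ₁,…,θ_M ∈ Θ, and P_j ∈ 𝒫_{θ_j} for each j ∈ {1,…,M}. Suppose there exists ε ∈ (0,1] such that (M^{−1}·inf_{Q} Σ_{j=1}^M KL(P_j,Q) + log(2−M^{−1}))/log M ≤ 1−ε, where the infimum is over all probability measures Q on X. Then, writing η := min_{1≤j<k≤M} d(θ_j,θ_k)/2, we have M_−(δ) ≥ g(η) for all δ ∈ (0,ε). -/

import Mathlib

/-!
Fix an estimator `T` and let `A j` be the event that `T` lands within `η / 2` of `θ j`; these
events are disjoint. For any probability measure `Q`, split `∫ llr (P j) Q ∂(P j)` over `A j`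
and its complement and bound each piece, through `log t ≥ 1 - 1 / t`, by the tangent line
`a log c + a - b c ≤ a log (a / b)` at `c = M / k` on `A j` and `c = 1 / k` off it, where
`k = 2 - 1 / M`. Summing over `j` gives `∑ j, KL(P j, Q) ≥ S log M - M log k` with
`S = ∑ j, P j (A j)`. The hypothesis then forces `S ≤ (1 - ε) M`, so some `P j` gives mass at
least `ε` to the complement of `A j`, where the loss is at least `g (η / 2)`.
-/

open MeasureTheory ENNReal
open scoped Classical

/-- The lower minimax `(1-δ)`th quantile. -/
noncomputable def lowerMinimaxQuantile {Θ 𝒳 : Type*} [MeasurableSpace Θ] [MeasurableSpace 𝒳]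
    (Pfam : Θ → Set (Measure 𝒳)) (L : Θ → Θ → ℝ) (δ : ℝ) : ℝ≥0∞ :=
  sInf {r : ℝ≥0∞ |
    (⨅ T : {f : 𝒳 → Θ // Measurable f}, ⨆ θ : Θ, ⨆ P ∈ Pfam θ,
      P {x | r < ENNReal.ofReal (L (T.1 x) θ)}) ≤ ENNReal.ofReal δ}

/-- Kullback--Leibler divergence: `∫ log(dP/dQ) dP` when `P ≪ Q` (and the log-likelihood
ratio is `P`-integrable), and `+∞` otherwise. -/
noncomputable def klDiv' {𝒳 : Type*} [MeasurableSpace 𝒳] (P Q : Measure 𝒳) : ℝ≥0∞ :=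
  if P ≪ Q ∧ Integrable (llr P Q) P then ENNReal.ofReal (∫ x, llr P Q x ∂P) else ⊤

lemma mul_log_add_sub_le_mul_log_div {a b c : ℝ} (ha : 0 ≤ a) (hb : 0 ≤ b) (hba : b = 0 → a = 0)
    (hc : 0 < c) :
    a * Real.log c + a - b * c ≤ a * Real.log (a / b) := by
  rcases ha.eq_or_lt with rfl | ha
  · simpa using mul_nonneg hb hc.le
  have hb : 0 < b := hb.lt_of_ne fun h => ha.ne' (hba h.symm)
  have h := Real.one_sub_inv_le_log_of_pos (by positivity : 0 < a / (b * c))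
  rw [Real.log_div ha.ne' (by positivity), Real.log_mul hb.ne' hc.ne', inv_div] at h
  rw [Real.log_div ha.ne' hb.ne']
  have : a * (1 - b * c / a) = a - b * c := by field_simp
  nlinarith

section KullbackLeibler

variable {𝒳 : Type*} [MeasurableSpace 𝒳] {μ ν : Measure 𝒳} {s : Set 𝒳}

lemma llr_restrict_ae_eq [SigmaFinite μ] [SigmaFinite ν] (hμν : μ ≪ ν) (hs : MeasurableSet s) :
    llr (μ.restrict s) (ν.restrict s) =ᵐ[μ.restrict s] llr μ ν := by
  have hdensity : μ.restrict s = (ν.restrict s).withDensity (μ.rnDeriv ν) := by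
    rw [← restrict_withDensity hs, Measure.withDensity_rnDeriv_eq μ ν hμν]
  have hrnDeriv : (μ.restrict s).rnDeriv (ν.restrict s) =ᵐ[ν.restrict s] μ.rnDeriv ν := by
    conv_lhs => rw [hdensity]
    exact Measure.rnDeriv_withDensity _ (Measure.measurable_rnDeriv μ ν)
  filter_upwards [(hμν.restrict s).ae_le hrnDeriv] with x hx
  simp only [llr, hx]

lemma mul_log_le_setIntegral_llr [IsFiniteMeasure μ] [IsFiniteMeasure ν] (hμν : μ ≪ ν)
    (hint : Integrable (llr μ ν) μ) (hs : MeasurableSet s) :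
    μ.real s * Real.log (μ.real s / ν.real s) ≤ ∫ x in s, llr μ ν x ∂μ := by
  have hllr := llr_restrict_ae_eq hμν hs
  have hint' := (hint.restrict (s := s)).congr hllr.symm
  have h := InformationTheory.mul_log_le_toReal_klDiv (hμν.restrict s) hint'
  rw [InformationTheory.toReal_klDiv (hμν.restrict s) hint', integral_congr_ae hllr] at h
  simpa [measureReal_restrict_apply_univ] using h

lemma mul_log_add_sub_le_setIntegral_llr [IsFiniteMeasure μ] [IsFiniteMeasure ν] (hμν : μ ≪ ν)
    (hint : Integrable (llr μ ν) μ) (hs : MeasurableSet s) {c : ℝ} (hc : 0 < c) :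
    μ.real s * Real.log c + μ.real s - ν.real s * c ≤ ∫ x in s, llr μ ν x ∂μ :=
  (mul_log_add_sub_le_mul_log_div measureReal_nonneg measureReal_nonneg
    (fun h => (measureReal_eq_zero_iff).2 (hμν ((measureReal_eq_zero_iff).1 h))) hc).trans
    (mul_log_le_setIntegral_llr hμν hint hs)

lemma ofReal_le_klDiv' [IsProbabilityMeasure μ] [IsProbabilityMeasure ν] (hs : MeasurableSet s)
    {c₁ c₂ : ℝ} (hc₁ : 0 < c₁) (hc₂ : 0 < c₂) :
    ENNReal.ofReal (μ.real s * Real.log c₁ + μ.real s - ν.real s * c₁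
      + (μ.real sᶜ * Real.log c₂ + μ.real sᶜ - ν.real sᶜ * c₂)) ≤ klDiv' μ ν := by
  unfold klDiv'
  split_ifs with h
  · rw [← integral_add_compl hs h.2]
    exact ENNReal.ofReal_le_ofReal (add_le_add
      (mul_log_add_sub_le_setIntegral_llr h.1 h.2 hs hc₁)
      (mul_log_add_sub_le_setIntegral_llr h.1 h.2 hs.compl hc₂))
  · exact le_top

end KullbackLeibler

section Fano

variable {𝒳 : Type*} [MeasurableSpace 𝒳]

lemma ofReal_fano_le_sum_klDiv' {M : ℕ} (hM : 0 < M) (P : Fin M → Measure 𝒳)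
    [∀ j, IsProbabilityMeasure (P j)] (Q : Measure 𝒳) [IsProbabilityMeasure Q]
    {A : Fin M → Set 𝒳} (hA : ∀ j, MeasurableSet (A j))
    (hdisj : Pairwise (Function.onFun Disjoint A)) :
    ENNReal.ofReal ((∑ j, (P j).real (A j)) * Real.log M - M * Real.log (2 - (M : ℝ)⁻¹)) ≤
      ∑ j, klDiv' (P j) Q := by
  set k : ℝ := 2 - (M : ℝ)⁻¹
  have hM1 : (1 : ℝ) ≤ M := by exact_mod_cast hM
  have hk : 0 < k := by have := inv_le_one_of_one_le₀ hM1; linarith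
  have hc₁ : 0 < M / k := by positivity
  have hc₂ : 0 < 1 / k := by positivity
  have hQ : ∑ j, Q.real (A j) ≤ 1 := by
    simpa using sum_measureReal_le_measureReal_univ (μ := Q) (fun j _ => hA j)
      (hdisj.set_pairwise _)
  have hslack : ∀ q : ℝ, q ≤ 1 → 0 ≤ M - q * (M / k) - (M - q) * k⁻¹ := by
    intro q hq
    have hMk : M * k = 2 * M - 1 := by simp only [k]; field_simp
    have : M - q * (M / k) - (M - q) * k⁻¹ = (M - 1) * (1 - q) / k := by
      field_simp
      linarith
    rw [this]
    exact div_nonneg (mul_nonneg (by linarith) (by linarith)) hk.le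
  let bound : Fin M → ℝ := fun j =>
    (P j).real (A j) * Real.log (M / k) + (P j).real (A j) - Q.real (A j) * (M / k)
      + ((P j).real (A j)ᶜ * Real.log (1 / k) + (P j).real (A j)ᶜ - Q.real (A j)ᶜ * (1 / k))
  calc ENNReal.ofReal ((∑ j, (P j).real (A j)) * Real.log M - M * Real.log k)
      ≤ ENNReal.ofReal (∑ j, bound j) := by
        refine ENNReal.ofReal_le_ofReal ?_
        simp only [bound, probReal_compl_eq_one_sub (hA _), Finset.sum_add_distrib,
          Finset.sum_sub_distrib, ← Finset.sum_mul, Finset.sum_const, Finset.card_univ,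
          Fintype.card_fin, nsmul_eq_mul, mul_one]
        rw [Real.log_div (by positivity) hk.ne', one_div, Real.log_inv]
        linarith [hslack _ hQ]
    _ ≤ ∑ j, ENNReal.ofReal (bound j) :=
        Finset.le_sum_of_subadditive _ ENNReal.ofReal_zero.le (fun _ _ => ENNReal.ofReal_add_le)
          _ _
    _ ≤ ∑ j, klDiv' (P j) Q := Finset.sum_le_sum fun j _ => ofReal_le_klDiv' (hA j) hc₁ hc₂

lemma exists_le_measureReal_compl_of_fano {M : ℕ} (hM : 2 ≤ M) (P : Fin M → Measure 𝒳)
    [∀ j, IsProbabilityMeasure (P j)] {A : Fin M → Set 𝒳} (hA : ∀ j, MeasurableSet (A j))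
    (hdisj : Pairwise (Function.onFun Disjoint A)) {ε : ℝ}
    (hfin : (⨅ Q : {Q : Measure 𝒳 // IsProbabilityMeasure Q},
      ∑ j : Fin M, klDiv' (P j) Q.1) ≠ ⊤)
    (hcond :
      ((M : ℝ)⁻¹ * (⨅ Q : {Q : Measure 𝒳 // IsProbabilityMeasure Q},
          ∑ j : Fin M, klDiv' (P j) Q.1).toReal + Real.log (2 - (M : ℝ)⁻¹)) / Real.log M
        ≤ 1 - ε) :
    ∃ j, ε ≤ (P j).real (A j)ᶜ := by
  set I := ⨅ Q : {Q : Measure 𝒳 // IsProbabilityMeasure Q}, ∑ j : Fin M, klDiv' (P j) Q.1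
  set S := ∑ j, (P j).real (A j)
  have hM0 : (0 : ℝ) < M := by positivity
  have hlogM : 0 < Real.log M := Real.log_pos (by exact_mod_cast hM)
  have hSI : S * Real.log M - M * Real.log (2 - (M : ℝ)⁻¹) ≤ I.toReal :=
    (ENNReal.ofReal_le_iff_le_toReal hfin).1 <| le_iInf fun Q =>
      haveI := Q.2; ofReal_fano_le_sum_klDiv' (by omega) P Q.1 hA hdisj
  rw [div_le_iff₀ hlogM] at hcond
  have hS : S ≤ (1 - ε) * M := by
    refine le_of_mul_le_mul_right ?_ hlogM
    have := mul_le_mul_of_nonneg_left hcond hM0.le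
    rw [mul_add, ← mul_assoc, mul_inv_cancel₀ hM0.ne', one_mul] at this
    linarith
  obtain ⟨j, -, hj⟩ := Finset.exists_le_of_sum_le ⟨⟨0, by omega⟩, Finset.mem_univ _⟩
    (f := fun _ => ε) (g := fun j => (P j).real (A j)ᶜ) (by
      simp only [probReal_compl_eq_one_sub (hA _), Finset.sum_sub_distrib, Finset.sum_const,
        Finset.card_univ, Fintype.card_fin, nsmul_eq_mul]
      linarith)
  exact ⟨j, hj⟩

end Fano

lemma le_lowerMinimaxQuantile {Θ 𝒳 : Type*} [MeasurableSpace Θ] [MeasurableSpace 𝒳]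
    {Pfam : Θ → Set (Measure 𝒳)} {L : Θ → Θ → ℝ} {δ ε : ℝ} (hε : 0 < ε) (hδε : δ < ε)
    {r₀ : ℝ≥0∞} (h : ∀ T : 𝒳 → Θ, Measurable T →
      ∃ θ, ∃ P ∈ Pfam θ, ENNReal.ofReal ε ≤ P {x | r₀ ≤ ENNReal.ofReal (L (T x) θ)}) :
    r₀ ≤ lowerMinimaxQuantile Pfam L δ := by
  refine le_sInf fun r hr => le_of_not_gt fun hr₀ => ?_
  have hεle : ENNReal.ofReal ε ≤ ⨅ T : {f : 𝒳 → Θ // Measurable f}, ⨆ θ : Θ, ⨆ P ∈ Pfam θ,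
      P {x | r < ENNReal.ofReal (L (T.1 x) θ)} := le_iInf fun T => by
    obtain ⟨θ, P, hP, hεP⟩ := h T.1 T.2
    exact le_iSup_of_le θ <| le_iSup₂_of_le P hP <|
      hεP.trans (measure_mono fun x hx => hr₀.trans_le hx)
  exact (hεle.trans hr).not_gt ((ENNReal.ofReal_lt_ofReal_iff hε).2 hδε)

theorem lowerMinimaxQuantile_ge_of_fano_general
    {Θ 𝒳 : Type*} [PseudoMetricSpace Θ] [MeasurableSpace Θ] [BorelSpace Θ]
    [MeasurableSpace 𝒳]
    (Pfam : Θ → Set (Measure 𝒳)) (hPfam : ∀ θ, ∀ P ∈ Pfam θ, IsProbabilityMeasure P)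
    (g : ℝ → ℝ) (hg : MonotoneOn g (Set.Ici 0))
    (M : ℕ) (hM : 2 ≤ M) (θ : Fin M → Θ) (P : Fin M → Measure 𝒳)
    (hP : ∀ j, P j ∈ Pfam (θ j))
    (ε : ℝ) (hε : ε ∈ Set.Ioc (0 : ℝ) 1)
    (hfin : (⨅ Q : {Q : Measure 𝒳 // IsProbabilityMeasure Q},
      ∑ j : Fin M, klDiv' (P j) Q.1) ≠ ⊤)
    (hcond :
      ((M : ℝ)⁻¹ * (⨅ Q : {Q : Measure 𝒳 // IsProbabilityMeasure Q},
          ∑ j : Fin M, klDiv' (P j) Q.1).toReal + Real.log (2 - (M : ℝ)⁻¹)) / Real.log M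
        ≤ 1 - ε) :
    ∀ δ : ℝ, 0 < δ → δ < ε →
      ENNReal.ofReal
          (g ((⨅ p : {p : Fin M × Fin M // p.1 ≠ p.2}, dist (θ p.1.1) (θ p.1.2)) / 2)) ≤
        lowerMinimaxQuantile Pfam (fun a b => g (dist a b)) δ := by
  intro δ _ hδε
  have := fun j => hPfam _ _ (hP j)
  set η := ⨅ p : {p : Fin M × Fin M // p.1 ≠ p.2}, dist (θ p.1.1) (θ p.1.2)
  have hη0 : 0 ≤ η := Real.iInf_nonneg fun _ => dist_nonneg
  have hη : ∀ j k, j ≠ k → η ≤ dist (θ j) (θ k) := fun j k hjk =>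
    ciInf_le (Set.finite_range _).bddBelow (⟨(j, k), hjk⟩ : {p : Fin M × Fin M // p.1 ≠ p.2})
  refine le_lowerMinimaxQuantile hε.1 hδε fun T hT => ?_
  set A := fun j => T ⁻¹' Metric.ball (θ j) (η / 2)
  have hdisj : Pairwise (Function.onFun Disjoint A) := fun j k hjk =>
    (Metric.ball_disjoint_ball (by linarith [hη j k hjk])).preimage T
  obtain ⟨j, hj⟩ := exists_le_measureReal_compl_of_fano hM P
    (fun j => hT Metric.isOpen_ball.measurableSet) hdisj hfin hcond
  refine ⟨θ j, P j, hP j, ?_⟩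
  calc ENNReal.ofReal ε ≤ P j (A j)ᶜ := by
        rw [← ofReal_measureReal]
        exact ENNReal.ofReal_le_ofReal hj
    _ ≤ _ := measure_mono fun x hx => ENNReal.ofReal_le_ofReal <|
        hg (div_nonneg hη0 zero_le_two) dist_nonneg (not_lt.1 hx)

/-- high-probability Fano bound. -/
theorem lowerMinimaxQuantile_ge_of_fano
    {Θ 𝒳 : Type*} [PseudoMetricSpace Θ] [Nonempty Θ] [MeasurableSpace Θ] [BorelSpace Θ]
    [MeasurableSpace 𝒳]
    (Pfam : Θ → Set (Measure 𝒳)) (hPfam : ∀ θ, ∀ P ∈ Pfam θ, IsProbabilityMeasure P)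
    (g : ℝ → ℝ) (hg : MonotoneOn g (Set.Ici 0)) (hg0 : ∀ x ∈ Set.Ici (0 : ℝ), 0 ≤ g x)
    (M : ℕ) (hM : 2 ≤ M) (θ : Fin M → Θ) (P : Fin M → Measure 𝒳)
    (hP : ∀ j, P j ∈ Pfam (θ j))
    (ε : ℝ) (hε : ε ∈ Set.Ioc (0 : ℝ) 1)
    (hfin : (⨅ Q : {Q : Measure 𝒳 // IsProbabilityMeasure Q},
      ∑ j : Fin M, klDiv' (P j) Q.1) ≠ ⊤)
    (hcond :
      ((M : ℝ)⁻¹ * (⨅ Q : {Q : Measure 𝒳 // IsProbabilityMeasure Q},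
          ∑ j : Fin M, klDiv' (P j) Q.1).toReal + Real.log (2 - (M : ℝ)⁻¹)) / Real.log M
        ≤ 1 - ε) :
    ∀ δ : ℝ, 0 < δ → δ < ε →
      ENNReal.ofReal
          (g ((⨅ p : {p : Fin M × Fin M // p.1 ≠ p.2}, dist (θ p.1.1) (θ p.1.2)) / 2)) ≤
        lowerMinimaxQuantile Pfam (fun a b => g (dist a b)) δ :=
  lowerMinimaxQuantile_ge_of_fano_general Pfam hPfam g hg M hM θ P hP ε hε hfin hcond
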